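/- Let U be the Hilbert space L²([0,T], ℝ^m) and X = L²([0,T], ℝ^n). Let W: U → X be the linear operator W[u](t) = ∫_{t_{k(t)}}^{t} Φ(t,s)B(s)u(s) ds, where [0,T] is partitioned into intervals [t_k, t_{k+1}) of length τ, k(t) is the index with t_{k(t)} ≤ t < t_{k(t)+1}, ‖Φ(t,s)‖_op ≤ exp((t−s)L_f) and ‖B(s)‖_op ≤ L_f for all s ≤ t. Then the operator norm of W satisfies ‖W‖_op ≤ τ·L_f·exp(τL_f). -/

import Mathlib

/-!
For fixed `t`, Cauchy–Schwarz on the window `(t_{k(t)}, t]`, of length at most `τ`, gives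
`‖W u(t)‖² ≤ τ (L_f e^{τ L_f})² ∫_{t_{k(t)}}^t ‖u(s)‖² ds`. Integrating in `t` and exchanging the
order of integration, each `s` lies in the window of a set of times `t` of measure at most `τ`,
which yields the second factor `τ`. Both steps are carried out for `ℝ≥0∞`-valued integrals,
where Tonelli and Hölder need no integrability hypotheses; only the final comparison of Bochner
integrals uses `u ∈ L²`.
-/

open Matrix MeasureTheory Set

/-- The `ℓ₂ → ℓ₂` operator norm of a real matrix. -/
noncomputable def opNorm {m n : ℕ} (M : Matrix (Fin m) (Fin n) ℝ) : ℝ :=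
  ‖LinearMap.toContinuousLinearMap (Matrix.toEuclideanLin M)‖

open scoped ENNReal

theorem ENNReal.sq_lintegral_le_measure_univ_mul {α : Type*} [MeasurableSpace α] {μ : Measure α}
    {f : α → ℝ≥0∞} (hf : AEMeasurable f μ) :
    (∫⁻ x, f x ∂μ) ^ 2 ≤ μ univ * ∫⁻ x, f x ^ 2 ∂μ := by
  have holder := ENNReal.lintegral_mul_le_Lp_mul_Lq μ Real.HolderConjugate.two_two
    aemeasurable_const hf (f := 1)
  simp only [one_mul, Pi.one_apply, one_pow, lintegral_one, ENNReal.rpow_two] at holder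
  calc (∫⁻ x, f x ∂μ) ^ 2
      ≤ (μ univ ^ (1 / 2 : ℝ) * (∫⁻ x, f x ^ 2 ∂μ) ^ (1 / 2 : ℝ)) ^ 2 := by gcongr
    _ = μ univ * ∫⁻ x, f x ^ 2 ∂μ := by
      rw [mul_pow, ← ENNReal.rpow_natCast, ← ENNReal.rpow_natCast, ← ENNReal.rpow_mul,
        ← ENNReal.rpow_mul]
      norm_num

theorem enorm_integral_sq_le {α E : Type*} [MeasurableSpace α] {μ : Measure α}
    [NormedAddCommGroup E] [NormedSpace ℝ E] {f : α → E} (hf : AEStronglyMeasurable f μ) :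
    ‖∫ x, f x ∂μ‖ₑ ^ 2 ≤ μ univ * ∫⁻ x, ‖f x‖ₑ ^ 2 ∂μ :=
  (pow_le_pow_left' (enorm_integral_le_lintegral_enorm f) 2).trans
    (ENNReal.sq_lintegral_le_measure_univ_mul hf.enorm)

theorem enorm_intervalIntegral_sq_le {E : Type*} [NormedAddCommGroup E] [NormedSpace ℝ E]
    {f : ℝ → E} {a b : ℝ} (hab : a ≤ b) (hf : AEStronglyMeasurable f (volume.restrict (Ioc a b))) :
    ‖∫ s in a..b, f s‖ₑ ^ 2 ≤ ENNReal.ofReal (b - a) * ∫⁻ s in Ioc a b, ‖f s‖ₑ ^ 2 := by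
  rw [intervalIntegral.integral_of_le hab, ← Real.volume_Ioc, ← Measure.restrict_apply_univ]
  exact enorm_integral_sq_le hf

theorem lintegral_setLIntegral_Ioc_le {a : ℝ → ℝ} (ha : Measurable a) {τ : ℝ}
    (hwin : ∀ t, t - τ ≤ a t) {g : ℝ → ℝ≥0∞} (hg : Measurable g) :
    ∫⁻ t, ∫⁻ s in Ioc (a t) t, g s ≤ ENNReal.ofReal τ * ∫⁻ s, g s := by
  have hE : MeasurableSet {p : ℝ × ℝ | p.2 ∈ Ioc (a p.1) p.1} :=
    (measurableSet_lt (ha.comp measurable_fst) measurable_snd).inter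
      (measurableSet_le measurable_snd measurable_fst)
  have hslice : ∀ s, volume {t | s ∈ Ioc (a t) t} ≤ ENNReal.ofReal τ := fun s =>
    calc volume {t | s ∈ Ioc (a t) t} ≤ volume (Ico s (s + τ)) :=
          measure_mono fun t ⟨hat, hst⟩ => ⟨hst, by linarith [hwin t]⟩
      _ = ENNReal.ofReal τ := by rw [Real.volume_Ico, add_sub_cancel_left]
  calc ∫⁻ t, ∫⁻ s in Ioc (a t) t, g s
      = ∫⁻ t, ∫⁻ s, (Ioc (a t) t).indicator g s := by
        simp only [lintegral_indicator measurableSet_Ioc]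
    _ = ∫⁻ s, ∫⁻ t, {t | s ∈ Ioc (a t) t}.indicator (fun _ => g s) t :=
        lintegral_lintegral_swap ((hg.comp measurable_snd).indicator hE).aemeasurable
    _ = ∫⁻ s, g s * volume {t | s ∈ Ioc (a t) t} := by
        refine lintegral_congr fun s => lintegral_indicator_const ?_ _
        exact measurable_prodMk_right hE
    _ ≤ ∫⁻ s, g s * ENNReal.ofReal τ := by gcongr with s; exact hslice s
    _ = ENNReal.ofReal τ * ∫⁻ s, g s := by rw [lintegral_mul_const _ hg, mul_comm]

theorem setLIntegral_enorm_intervalIntegral_sq_le {E F : Type*} [NormedAddCommGroup E]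
    [NormedSpace ℝ E] [NormedAddCommGroup F] [MeasurableSpace F] [BorelSpace F]
    {S : Set ℝ} (hS : MeasurableSet S) {a : ℝ → ℝ} (ha : Measurable a) {τ C : ℝ}
    (hle : ∀ t, a t ≤ t) (hwin : ∀ t, t - τ ≤ a t) (hwinS : ∀ t ∈ S, Ioc (a t) t ⊆ S)
    {f : ℝ → ℝ → E} (hf : ∀ t, AEStronglyMeasurable (f t) (volume.restrict (Ioc (a t) t)))
    {v : ℝ → F} (hv : Measurable v) (hfv : ∀ t, ∀ s ∈ Ioc (a t) t, ‖f t s‖ ≤ C * ‖v s‖) :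
    ∫⁻ t in S, ‖∫ s in a t..t, f t s‖ₑ ^ 2
      ≤ ENNReal.ofReal (τ * C) ^ 2 * ∫⁻ s in S, ‖v s‖ₑ ^ 2 := by
  have hτ : 0 ≤ τ := by linarith [hle 0, hwin 0]
  set g : ℝ → ℝ≥0∞ := S.indicator fun s => ‖v s‖ₑ ^ 2
  have hg : Measurable g := (hv.enorm.pow_const 2).indicator hS
  have hpt : ∀ t ∈ S, ‖∫ s in a t..t, f t s‖ₑ ^ 2
      ≤ ENNReal.ofReal τ * ENNReal.ofReal C ^ 2 * ∫⁻ s in Ioc (a t) t, g s := by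
    intro t ht
    calc ‖∫ s in a t..t, f t s‖ₑ ^ 2
        ≤ ENNReal.ofReal (t - a t) * ∫⁻ s in Ioc (a t) t, ‖f t s‖ₑ ^ 2 :=
          enorm_intervalIntegral_sq_le (hle t) (hf t)
      _ ≤ ENNReal.ofReal τ * ∫⁻ s in Ioc (a t) t, ENNReal.ofReal C ^ 2 * g s := by
          gcongr ?_ * ?_
          · exact ENNReal.ofReal_le_ofReal (by linarith [hwin t])
          · refine setLIntegral_mono' measurableSet_Ioc fun s hs => ?_
            rw [show g s = _ from indicator_of_mem (hwinS t ht hs) _, ← mul_pow, ← ofReal_norm,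
              ← ofReal_norm, ← ENNReal.ofReal_mul' (norm_nonneg _)]
            gcongr
            exact hfv t s hs
      _ = ENNReal.ofReal τ * ENNReal.ofReal C ^ 2 * ∫⁻ s in Ioc (a t) t, g s := by
          rw [lintegral_const_mul _ hg, mul_assoc]
  calc ∫⁻ t in S, ‖∫ s in a t..t, f t s‖ₑ ^ 2
      ≤ ∫⁻ t in S, ENNReal.ofReal τ * ENNReal.ofReal C ^ 2 * ∫⁻ s in Ioc (a t) t, g s :=
        setLIntegral_mono' hS hpt
    _ ≤ ∫⁻ t, ENNReal.ofReal τ * ENNReal.ofReal C ^ 2 * ∫⁻ s in Ioc (a t) t, g s :=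
        setLIntegral_le_lintegral _ _
    _ ≤ ENNReal.ofReal τ * ENNReal.ofReal C ^ 2 * (ENNReal.ofReal τ * ∫⁻ s, g s) := by
        rw [lintegral_const_mul' _ _ (by finiteness)]
        gcongr
        exact lintegral_setLIntegral_Ioc_le ha hwin hg
    _ = ENNReal.ofReal (τ * C) ^ 2 * ∫⁻ s in S, ‖v s‖ₑ ^ 2 := by
        rw [lintegral_indicator hS, ENNReal.ofReal_mul hτ]
        ring

theorem ofReal_integral_norm_sq_eq {α E : Type*} [MeasurableSpace α] {μ : Measure α}
    [NormedAddCommGroup E] {f : α → E} (hf : Integrable (fun x => ‖f x‖ ^ 2) μ) :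
    ENNReal.ofReal (∫ x, ‖f x‖ ^ 2 ∂μ) = ∫⁻ x, ‖f x‖ₑ ^ 2 ∂μ := by
  rw [ofReal_integral_eq_lintegral_ofReal hf (ae_of_all _ fun x => by positivity)]
  simp only [ENNReal.ofReal_pow (norm_nonneg _), ofReal_norm]

theorem integral_norm_sq_le_of_lintegral_le {α E F : Type*} [MeasurableSpace α] {μ : Measure α}
    [NormedAddCommGroup E] [NormedAddCommGroup F] {f : α → E} {g : α → F} {c : ℝ} (hc : 0 ≤ c)
    (hg : MemLp g 2 μ) (h : ∫⁻ x, ‖f x‖ₑ ^ 2 ∂μ ≤ ENNReal.ofReal c * ∫⁻ x, ‖g x‖ₑ ^ 2 ∂μ) :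
    ∫ x, ‖f x‖ ^ 2 ∂μ ≤ c * ∫ x, ‖g x‖ ^ 2 ∂μ := by
  by_cases hf : Integrable (fun x => ‖f x‖ ^ 2) μ
  · rw [← ENNReal.ofReal_le_ofReal_iff (by positivity), ENNReal.ofReal_mul hc,
      ofReal_integral_norm_sq_eq hf,
      ofReal_integral_norm_sq_eq (hg.integrable_norm_pow two_ne_zero)]
    exact h
  · rw [integral_undef hf]
    positivity

theorem measurable_mulVec {α ι κ : Type*} [MeasurableSpace α] [Fintype κ]
    {M : α → Matrix ι κ ℝ} (hM : ∀ i j, Measurable fun a => M a i j) {x : α → κ → ℝ}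
    (hx : Measurable x) : Measurable fun a => M a *ᵥ x a :=
  measurable_pi_lambda _ fun i => Finset.measurable_sum _ fun j _ =>
    (hM i j).mul ((measurable_pi_apply j).comp hx)

theorem sum_sq_eq_norm_toLp_sq {ι : Type*} [Fintype ι] (x : ι → ℝ) :
    ∑ i, x i ^ 2 = ‖WithLp.toLp 2 x‖ ^ 2 := by
  simp [EuclideanSpace.real_norm_sq_eq]

theorem sum_sq_intervalIntegral_eq {ι : Type*} [Fintype ι] (F : ℝ → ι → ℝ) (a b : ℝ) :
    ∑ i, (∫ s in a..b, F s) i ^ 2 = ‖∫ s in a..b, WithLp.toLp 2 (F s)‖ ^ 2 := by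
  let e := (PiLp.continuousLinearEquiv 2 ℝ fun _ : ι => ℝ).symm
  have he : ∀ x, e x = WithLp.toLp 2 x := fun _ => rfl
  rw [sum_sq_eq_norm_toLp_sq, intervalIntegral, intervalIntegral, ← he, map_sub,
    ← e.integral_comp_comm, ← e.integral_comp_comm]
  rfl

theorem norm_toLp_mulVec_le {m n : ℕ} (M : Matrix (Fin m) (Fin n) ℝ) (x : Fin n → ℝ) :
    ‖WithLp.toLp 2 (M *ᵥ x)‖ ≤ opNorm M * ‖WithLp.toLp 2 x‖ :=
  (LinearMap.toContinuousLinearMap (toEuclideanLin M)).le_opNorm (WithLp.toLp 2 x)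

theorem norm_toLp_mul_mulVec_le {k m n : ℕ} {M : Matrix (Fin k) (Fin m) ℝ}
    {N : Matrix (Fin m) (Fin n) ℝ} {a b : ℝ} (hM : opNorm M ≤ a) (hN : opNorm N ≤ b)
    (x : Fin n → ℝ) : ‖WithLp.toLp 2 ((M * N) *ᵥ x)‖ ≤ a * b * ‖WithLp.toLp 2 x‖ := by
  have hM0 : 0 ≤ opNorm M := norm_nonneg _
  rw [← mulVec_mulVec, mul_assoc]
  calc _ ≤ opNorm M * ‖WithLp.toLp 2 (N *ᵥ x)‖ := norm_toLp_mulVec_le M _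
    _ ≤ a * (b * ‖WithLp.toLp 2 x‖) := by
      gcongr
      · linarith
      · exact (norm_toLp_mulVec_le N x).trans (by gcongr)

theorem mul_floor_div_le {τ : ℝ} (hτ : 0 < τ) (t : ℝ) : τ * ⌊t / τ⌋ ≤ t := by
  have := Int.floor_le (t / τ)
  rwa [le_div_iff₀ hτ, mul_comm] at this

theorem sub_lt_mul_floor_div {τ : ℝ} (hτ : 0 < τ) (t : ℝ) : t - τ < τ * ⌊t / τ⌋ := by
  have := Int.lt_floor_add_one (t / τ)
  rw [div_lt_iff₀ hτ] at this
  linarith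

theorem mul_floor_div_nonneg {τ t : ℝ} (hτ : 0 < τ) (ht : 0 ≤ t) : 0 ≤ τ * ⌊t / τ⌋ :=
  mul_nonneg hτ.le (by exact_mod_cast Int.floor_nonneg.mpr (div_nonneg ht hτ.le))

/-- Operator-norm bound for the short-window convolution operator
`W[u](t) = ∫_{t_{k(t)}}^t Φ(t,s) B(s) u(s) ds`, where `t_{k(t)} = τ⌊t/τ⌋`,
`‖Φ(t,s)‖_op ≤ e^{(t−s)L_f}` and `‖B(s)‖_op ≤ L_f`: for every `u ∈ L²`,
`‖W u‖²_{L²[0,T]} ≤ (τ L_f e^{τ L_f})² ‖u‖²_{L²[0,T]}`, i.e. `‖W‖_op ≤ τ L_f e^{τ L_f}`. -/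
theorem short_window_operator_norm_bound {n m : ℕ}
    (T τ Lf : ℝ) (hT : 0 ≤ T) (hτ : 0 < τ) (hLf : 0 ≤ Lf)
    (Φ : ℝ → ℝ → Matrix (Fin n) (Fin n) ℝ) (B : ℝ → Matrix (Fin n) (Fin m) ℝ)
    (hΦc : ∀ i j, Continuous fun p : ℝ × ℝ => Φ p.1 p.2 i j)
    (hBc : ∀ i j, Continuous fun s => B s i j)
    (hΦ : ∀ s t : ℝ, s ≤ t → opNorm (Φ t s) ≤ Real.exp ((t - s) * Lf))
    (hB : ∀ s, opNorm (B s) ≤ Lf)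
    (u : ℝ → Fin m → ℝ) (hu : Measurable u)
    (huL2 : MemLp u 2 (volume.restrict (Icc 0 T))) :
    (∫ t in (0:ℝ)..T,
        ∑ i, ((∫ s in (τ * (⌊t / τ⌋ : ℝ))..t, (Φ t s * B s).mulVec (u s)) i) ^ 2)
      ≤ (τ * Lf * Real.exp (τ * Lf)) ^ 2 * ∫ s in (0:ℝ)..T, ∑ j, (u s j) ^ 2 := by
  have hΦt : ∀ t, Continuous (Φ t) := fun t =>
    continuous_pi fun i => continuous_pi fun j => (hΦc i j).comp (Continuous.prodMk_right t)
  have hBcont : Continuous B := continuous_pi fun i => continuous_pi fun j => hBc i j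
  have hF : ∀ t, Measurable fun s => WithLp.toLp 2 ((Φ t s * B s) *ᵥ u s) := fun t =>
    (PiLp.continuous_toLp 2 _).measurable.comp <| measurable_mulVec
      (fun i j => (((hΦt t).matrix_mul hBcont).matrix_elem i j).measurable) hu
  have hkernel : ∀ t, ∀ s ∈ Ioc (τ * (⌊t / τ⌋ : ℝ)) t,
      ‖WithLp.toLp 2 ((Φ t s * B s) *ᵥ u s)‖
        ≤ Real.exp (τ * Lf) * Lf * ‖WithLp.toLp 2 (u s)‖ := fun t s hs =>
    norm_toLp_mul_mulVec_le ((hΦ s t hs.2).trans (Real.exp_le_exp.2 (mul_le_mul_of_nonneg_right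
      (by linarith [sub_lt_mul_floor_div hτ t, hs.1]) hLf))) (hB s) (u s)
  have hwindow : ∀ t ∈ Ioc 0 T, Ioc (τ * (⌊t / τ⌋ : ℝ)) t ⊆ Ioc 0 T := fun t ht s hs =>
    ⟨(mul_floor_div_nonneg hτ ht.1.le).trans_lt hs.1, hs.2.trans ht.2⟩
  have hv : MemLp (fun s => WithLp.toLp 2 (u s)) 2 (volume.restrict (Ioc 0 T)) :=
    ((PiLp.continuousLinearEquiv 2 ℝ fun _ : Fin m => ℝ).symm.toContinuousLinearMap.comp_memLp'
      huL2).mono_measure (Measure.restrict_mono Ioc_subset_Icc_self le_rfl)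
  have key := setLIntegral_enorm_intervalIntegral_sq_le measurableSet_Ioc (by fun_prop)
    (mul_floor_div_le hτ) (fun t => (sub_lt_mul_floor_div hτ t).le) hwindow
    (fun t => (hF t).aestronglyMeasurable) ((PiLp.continuous_toLp 2 _).measurable.comp hu) hkernel
  rw [← ENNReal.ofReal_pow (by positivity)] at key
  have := integral_norm_sq_le_of_lintegral_le (by positivity) hv key
  simp only [sum_sq_intervalIntegral_eq, sum_sq_eq_norm_toLp_sq, intervalIntegral.integral_of_le hT]
  convert this using 2
  ring
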